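/- There is a uniform bound: there exist M > 0 and P' > 0 such that ‖y_A − y_d‖_Y ≤ M, ‖u_A‖_{L^∞(Ω)} ≤ P' and ‖p_A‖_{L^q(Ω)} ≤ P' for all measurable sets A ⊆ Ω and all solutions (u_A, y_A, p_A) of (P_A) with χ_A·u_A = u_A, where q > 3 is the exponent for which S* maps Y boundedly into L^q(Ω). -/

import Mathlib

open MeasureTheory ENNReal Set Filter Metric Topology
open scoped Classical symmDiff NNReal

noncomputable section

namespace L0Control

variable {α : Type*} [MeasurableSpace α]

/-- The characteristic function `χ_A` of a set `A`, as a real-valued function. -/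
def chi (A : Set α) (x : α) : ℝ := A.indicator (fun _ => (1 : ℝ)) x

/-- Pointwise multiplication of `u ∈ L²(μ)` by the characteristic function of `A`,
as an element of `L²(μ)` (junk value `0` if `A` is not measurable). -/
def chiMul {μ : Measure α} (A : Set α) (u : Lp ℝ 2 μ) : Lp ℝ 2 μ :=
  if hA : MeasurableSet A then
    MemLp.toLp (A.indicator (u : α → ℝ)) ((Lp.memLp u).indicator hA)
  else 0

variable {Y : Type*} [NormedAddCommGroup Y] [InnerProductSpace ℝ Y]

/-- The objective functional
`J(u, A) = ½‖S(χ_A u) − y_d‖² + ∫_Ω (g(u(x)) + χ_A(x) β(x)) dx`,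
with values in `EReal` (the `g`-part may be `+∞`). -/
def Jfun {μ : Measure α} (S : Lp ℝ 2 μ →L[ℝ] Y) (yd : Y) (g : ℝ → ℝ≥0∞) (β : α → ℝ)
    (u : Lp ℝ 2 μ) (A : Set α) : EReal :=
  ((2⁻¹ * ‖S (chiMul A u) - yd‖ ^ 2 + ∫ x in A, β x ∂μ : ℝ) : EReal)
    + ((∫⁻ x, g (u x) ∂μ : ℝ≥0∞) : EReal)

/-- `u` minimizes `J(·, A)` over `L²(μ)`. -/
def IsMinimizer {μ : Measure α} (S : Lp ℝ 2 μ →L[ℝ] Y) (yd : Y) (g : ℝ → ℝ≥0∞) (β : α → ℝ)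
    (A : Set α) (u : Lp ℝ 2 μ) : Prop :=
  ∀ v : Lp ℝ 2 μ, Jfun S yd g β u A ≤ Jfun S yd g β v A

/-- `(u, y, p)` is a solution triple of the problem `(P_A)`:
`u` minimizes `J(·, A)`, `y = S(χ_A u)` is the state and `p = S*(y − y_d)` the adjoint state. -/
def IsSolution {μ : Measure α} [CompleteSpace Y] (S : Lp ℝ 2 μ →L[ℝ] Y) (yd : Y)
    (g : ℝ → ℝ≥0∞) (β : α → ℝ) (A : Set α) (u : Lp ℝ 2 μ) (y : Y) (p : Lp ℝ 2 μ) : Prop :=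
  IsMinimizer S yd g β A u ∧ y = S (chiMul A u) ∧
    p = ContinuousLinearMap.adjoint S (y - yd)

/-- The value function `J(A) = inf_{u ∈ L²} J(u, A)`. -/
def Jval {μ : Measure α} (S : Lp ℝ 2 μ →L[ℝ] Y) (yd : Y) (g : ℝ → ℝ≥0∞) (β : α → ℝ)
    (A : Set α) : EReal :=
  ⨅ u : Lp ℝ 2 μ, Jfun S yd g β u A

/-- `H̄(p) = min_{u ∈ ℝ} (p·u + g(u)) = −g*(−p)`, with values in `EReal`. -/
def Hbar (g : ℝ → ℝ≥0∞) (p : ℝ) : EReal :=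
  ⨅ u : ℝ, ((p * u : ℝ) : EReal) + (g u : EReal)

/-- `H̄(p)` as a real number (it is finite under the standing assumptions). -/
def HbarR (g : ℝ → ℝ≥0∞) (p : ℝ) : ℝ := (Hbar g p).toReal

/-- Absolute value on `EReal`. -/
def eabs (x : EReal) : EReal := max x (-x)

/-!
Comparing a minimizer `u_A` with the admissible control `0` (for which `J(0, A) = ½‖y_d‖² + ∫_A β`,
since `g(0) = 0`) cancels the `β`-terms and leaves `½‖y_A − y_d‖² + ∫ g(u_A) ≤ ½‖y_d‖²`. Hence
`‖y_A − y_d‖ ≤ ‖y_d‖`, and `∫ g(u_A) < ∞` forces `u_A(x) ∈ dom g` almost everywhere, which is bounded.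
The bound on `p_A = S*(y_A − y_d)` in `L^q` is then the boundedness of `S* : Y → L^q(Ω)`.
-/

variable {μ : Measure α}

theorem chiMul_zero (A : Set α) : chiMul A (0 : Lp ℝ 2 μ) = 0 := by
  unfold chiMul
  split_ifs
  · have hae : A.indicator ((0 : Lp ℝ 2 μ) : α → ℝ) =ᵐ[μ] 0 := by
      filter_upwards [Lp.coeFn_zero ℝ 2 μ] with x hx
      by_cases hxA : x ∈ A
      · rw [Set.indicator_of_mem hxA, hx]
      · exact Set.indicator_of_notMem hxA _
    rw [(MemLp.toLp_eq_toLp_iff _ (MemLp.zero : MemLp (0 : α → ℝ) 2 μ)).2 hae, MemLp.toLp_zero]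
  · rfl

theorem Jfun_zero {S : Lp ℝ 2 μ →L[ℝ] Y} {yd : Y} {g : ℝ → ℝ≥0∞} (hg0 : g 0 = 0) (β : α → ℝ)
    (A : Set α) : Jfun S yd g β 0 A = ((2⁻¹ * ‖yd‖ ^ 2 + ∫ x in A, β x ∂μ : ℝ) : EReal) := by
  have hg : ∫⁻ x, g ((0 : Lp ℝ 2 μ) x) ∂μ = 0 := by
    refine (lintegral_congr_ae ?_).trans lintegral_zero
    filter_upwards [Lp.coeFn_zero ℝ 2 μ] with x hx
    rw [hx]
    exact hg0
  rw [Jfun, hg, chiMul_zero]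
  simp

theorem ne_top_and_add_toReal_le_of_coe_add_le {a b : ℝ} {G : ℝ≥0∞}
    (h : (a : EReal) + G ≤ b) : G ≠ ⊤ ∧ a + G.toReal ≤ b := by
  have hG : G ≠ ⊤ := by
    rintro rfl
    simp [EReal.add_top_of_ne_bot (EReal.coe_ne_bot a)] at h
  refine ⟨hG, ?_⟩
  rwa [← EReal.coe_ennreal_toReal hG, ← EReal.coe_add, EReal.coe_le_coe_iff] at h

section IsMinimizer

variable {S : Lp ℝ 2 μ →L[ℝ] Y} {yd : Y} {g : ℝ → ℝ≥0∞} {β : α → ℝ} {A : Set α} {u : Lp ℝ 2 μ}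

theorem IsMinimizer.le_cost_zero (hu : IsMinimizer S yd g β A u) (hg0 : g 0 = 0) :
    ∫⁻ x, g (u x) ∂μ ≠ ⊤ ∧
      2⁻¹ * ‖S (chiMul A u) - yd‖ ^ 2 + (∫⁻ x, g (u x) ∂μ).toReal ≤ 2⁻¹ * ‖yd‖ ^ 2 := by
  obtain ⟨hfin, hle⟩ := ne_top_and_add_toReal_le_of_coe_add_le ((hu 0).trans_eq (Jfun_zero hg0 β A))
  exact ⟨hfin, by linarith⟩

theorem IsMinimizer.lintegral_ne_top (hu : IsMinimizer S yd g β A u) (hg0 : g 0 = 0) :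
    ∫⁻ x, g (u x) ∂μ ≠ ⊤ :=
  (hu.le_cost_zero hg0).1

theorem IsMinimizer.norm_sub_le (hu : IsMinimizer S yd g β A u) (hg0 : g 0 = 0) :
    ‖S (chiMul A u) - yd‖ ≤ ‖yd‖ := by
  have hle := (hu.le_cost_zero hg0).2
  have hsq : ‖S (chiMul A u) - yd‖ ^ 2 ≤ ‖yd‖ ^ 2 := by
    linarith [ENNReal.toReal_nonneg (a := ∫⁻ x, g (u x) ∂μ)]
  exact (pow_le_pow_iff_left₀ (norm_nonneg _) (norm_nonneg _) two_ne_zero).1 hsq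

end IsMinimizer

theorem eLpNorm_top_le_of_lintegral_comp_ne_top {f : α → ℝ} (hf : AEMeasurable f μ)
    {g : ℝ → ℝ≥0∞} (hg : Measurable g) {R : ℝ} (hR : ∀ u, g u ≠ ⊤ → |u| ≤ R)
    (hfin : ∫⁻ x, g (f x) ∂μ ≠ ⊤) : eLpNorm f ⊤ μ ≤ ENNReal.ofReal R := by
  rw [eLpNorm_exponent_top]
  refine eLpNormEssSup_le_of_ae_bound ?_
  filter_upwards [ae_lt_top' (hg.comp_aemeasurable hf) hfin] with x hx
  exact hR _ hx.ne

end L0Control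

open L0Control

theorem uniform_bounds_nonstrongly_convex_general
    {d : ℕ} {Ω : Set (EuclideanSpace ℝ (Fin d))}
    {Y : Type*} [NormedAddCommGroup Y] [InnerProductSpace ℝ Y] [CompleteSpace Y]
    (S : Lp ℝ 2 (volume.restrict Ω) →L[ℝ] Y) (yd : Y)
    (g : ℝ → ℝ≥0∞)
    (hg_lsc : LowerSemicontinuous g)
    (hg_zero : ∀ u : ℝ, g u = 0 ↔ u = 0)
    (β : EuclideanSpace ℝ (Fin d) → ℝ)
    (hgdom : ∃ Rg : ℝ, ∀ u : ℝ, g u ≠ ⊤ → |u| ≤ Rg)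
    (q : ℝ≥0∞) (CS : ℝ)
    (hSstar : ∀ z : Y,
      eLpNorm (⇑(ContinuousLinearMap.adjoint S z)) q (volume.restrict Ω) ≤ ENNReal.ofReal (CS * ‖z‖))
    :
    ∃ M P' : ℝ, 0 < M ∧ 0 < P' ∧
      ∀ A : Set (EuclideanSpace ℝ (Fin d)), MeasurableSet A → A ⊆ Ω →
        ∀ (uA : Lp ℝ 2 (volume.restrict Ω)) (yA : Y) (pA : Lp ℝ 2 (volume.restrict Ω)),
          IsSolution S yd g β A uA yA pA → chiMul A uA = uA →
            ‖yA - yd‖ ≤ M ∧ eLpNorm (⇑uA) ⊤ (volume.restrict Ω) ≤ ENNReal.ofReal P' ∧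
              eLpNorm (⇑pA) q (volume.restrict Ω) ≤ ENNReal.ofReal P' := by
  obtain ⟨Rg, hRg⟩ := hgdom
  have hg0 : g 0 = 0 := (hg_zero 0).2 rfl
  set M := ‖yd‖ + 1
  have hM : 0 ≤ |CS| * M := by positivity
  refine ⟨M, |Rg| + |CS| * M + 1, by positivity, by positivity, ?_⟩
  rintro A - - uA yA pA ⟨hmin, rfl, rfl⟩ -
  have hy : ‖S (chiMul A uA) - yd‖ ≤ M := by linarith [hmin.norm_sub_le hg0]
  refine ⟨hy, ?_, ?_⟩
  · refine (eLpNorm_top_le_of_lintegral_comp_ne_top (Lp.aestronglyMeasurable uA).aemeasurable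
      hg_lsc.measurable hRg (hmin.lintegral_ne_top hg0)).trans (ENNReal.ofReal_le_ofReal ?_)
    linarith [le_abs_self Rg]
  · refine (hSstar _).trans (ENNReal.ofReal_le_ofReal ?_)
    have := mul_le_mul (le_abs_self CS) hy (norm_nonneg _) (abs_nonneg CS)
    linarith [abs_nonneg Rg]

/-- Non-strongly-convex case: uniform bounds `‖y_A − y_d‖_Y ≤ M`,
`‖u_A‖_{L^∞} ≤ P'` and `‖p_A‖_{L^q} ≤ P'` for all measurable `A ⊆ Ω` and all
solutions of `(P_A)` with `χ_A u_A = u_A`, where `q > 3` and `S* ∈ L(Y, L^q(Ω))`. -/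
theorem uniform_bounds_nonstrongly_convex
    {d : ℕ} {Ω : Set (EuclideanSpace ℝ (Fin d))}
    (hΩm : MeasurableSet Ω) (hΩfin : volume Ω < ⊤)
    {Y : Type*} [NormedAddCommGroup Y] [InnerProductSpace ℝ Y] [CompleteSpace Y]
    (S : Lp ℝ 2 (volume.restrict Ω) →L[ℝ] Y) (yd : Y)
    (g : ℝ → ℝ≥0∞)
    (hg_proper : ∃ u : ℝ, g u ≠ ⊤)
    (hg_lsc : LowerSemicontinuous g)
    (hg_zero : ∀ u : ℝ, g u = 0 ↔ u = 0)
    (β : EuclideanSpace ℝ (Fin d) → ℝ)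
    (hβ : Integrable β (volume.restrict Ω))
    (hg_conv : ∀ u v l : ℝ, l ∈ Set.Ioo (0 : ℝ) 1 →
      g (l * u + (1 - l) * v) ≤ ENNReal.ofReal l * g u + ENNReal.ofReal (1 - l) * g v)
    (hgdom : ∃ Rg : ℝ, ∀ u : ℝ, g u ≠ ⊤ → |u| ≤ Rg)
    (q : ℝ≥0∞) (hq : 3 < q) (CS : ℝ)
    (hSstar : ∀ z : Y,
      eLpNorm (⇑(ContinuousLinearMap.adjoint S z)) q (volume.restrict Ω) ≤ ENNReal.ofReal (CS * ‖z‖))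
    :
    ∃ M P' : ℝ, 0 < M ∧ 0 < P' ∧
      ∀ A : Set (EuclideanSpace ℝ (Fin d)), MeasurableSet A → A ⊆ Ω →
        ∀ (uA : Lp ℝ 2 (volume.restrict Ω)) (yA : Y) (pA : Lp ℝ 2 (volume.restrict Ω)),
          IsSolution S yd g β A uA yA pA → chiMul A uA = uA →
            ‖yA - yd‖ ≤ M ∧ eLpNorm (⇑uA) ⊤ (volume.restrict Ω) ≤ ENNReal.ofReal P' ∧
              eLpNorm (⇑pA) q (volume.restrict Ω) ≤ ENNReal.ofReal P' :=
  uniform_bounds_nonstrongly_convex_general S yd g hg_lsc hg_zero β hgdom q CS hSstar
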